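/- There exists a function f : ℕ → ℕ such that the following holds. Let G be a finite nonabelian simple group admitting an automorphism α of order e > 1 with gcd(e, |G|) = 1, and let r be a positive integer such that |[P,α]| ≤ r for every prime p and every Sylow p-subgroup P of G with α(P) = P. Then |G| ≤ f(r). -/

import Mathlib

/-!
For every prime `p` the coprime automorphism `α` fixes some Sylow `p`-subgroup `P` of `G`
(Glauberman's lemma for the cyclic group `⟨α⟩`). On such a `P`, `g ↦ g α(g)⁻¹` embeds
`P / C_P(α)` into `[P, α]`, and `|P : C_P(α)|` is divisible by the `p`-part of `|G : C_G(α)|`.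
So every prime power dividing `|G : C_G(α)|` is at most `r`, whence `|G : C_G(α)|` divides `r!`.
Since `α ≠ 1`, `C_G(α)` is a proper subgroup of the simple group `G`, which therefore acts
faithfully on its cosets: `|G| ≤ (r!)!`.
-/

open MulAction Pointwise

theorem Subgroup.mem_of_pow_mem_of_coprime {G : Type*} [Group G] {H : Subgroup G} {g : G}
    {m n : ℕ} (hmn : m.Coprime n) (hm : g ^ m ∈ H) (hn : g ^ n ∈ H) : g ∈ H := by
  have : g = (g ^ m) ^ m.gcdA n * (g ^ n) ^ m.gcdB n := by
    rw [← zpow_natCast, ← zpow_natCast, ← zpow_mul, ← zpow_mul, ← zpow_add, ← Nat.gcd_eq_gcd_ab,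
      hmn.gcd_eq_one, Nat.cast_one, zpow_one]
  rw [this]
  exact mul_mem (zpow_mem hm _) (zpow_mem hn _)

section Action

variable {K X : Type*} [Group K] [MulAction K X]

theorem MulAction.smul_eq_self_of_pow_smul_eq_self_of_coprime {k : K} {x : X} {m n : ℕ}
    (hmn : m.Coprime n) (hm : k ^ m • x = x) (hn : k ^ n • x = x) : k • x = x :=
  Subgroup.mem_of_pow_mem_of_coprime (H := stabilizer K x) hmn hm hn

theorem MulAction.exists_mem_smul_eq_self_of_pow_prime_pow_eq_one {q a : ℕ} [Fact q.Prime]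
    {k : K} (hk : k ^ q ^ a = 1) {Y : Set X} (hY : ∀ x, k • x ∈ Y ↔ x ∈ Y)
    (hqY : ¬ q ∣ Nat.card Y) : ∃ y ∈ Y, k • y = y := by
  have : Finite Y := Nat.finite_of_card_ne_zero (by rintro h; simp [h] at hqY)
  have := Fintype.ofFinite Y
  let π := (toPerm k : Equiv.Perm X).subtypePerm hY
  have hπ : π ^ q ^ a = 1 := by
    ext y
    simp [π, ← toPermHom_apply, ← map_pow, hk]
  obtain ⟨y, hy⟩ :=
    Equiv.Perm.exists_fixed_point_of_prime (by rwa [← Nat.card_eq_fintype_card]) hπ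
  exact ⟨y, y.2, congrArg Subtype.val hy⟩

theorem Commute.smul_smul_eq_smul_iff {k l : K} (hkl : Commute k l) {x : X} :
    k • l • x = l • x ↔ k • x = x := by
  rw [smul_smul, hkl.eq, mul_smul, smul_left_cancel_iff]

theorem MulAction.card_transporter_dvd_card [Finite K] (H : Subgroup K) {g₀ : K} (hg₀ : g₀ ∈ H)
    (x : X) : Nat.card {g | g ∈ H ∧ g • x = g₀ • x} ∣ Nat.card K := by
  have : {g | g ∈ H ∧ g • x = g₀ • x} = g₀ • ((H ⊓ stabilizer K x : Subgroup K) : Set K) := by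
    ext g
    rw [Set.mem_smul_set_iff_inv_smul_mem]
    simp [mul_smul, inv_smul_eq_iff, H.mul_mem_cancel_left (H.inv_mem hg₀)]
  rw [this, Set.natCard_smul_set]
  exact Subgroup.card_subgroup_dvd_card _

end Action

namespace MulAut

variable {G : Type*} [Group G]

def fixedSubgroup (φ : MulAut G) : Subgroup G :=
  (φ : G →* G).eqLocus (MonoidHom.id G)

@[simp]
theorem mem_fixedSubgroup {φ : MulAut G} {g : G} : g ∈ φ.fixedSubgroup ↔ φ g = g :=
  Iff.rfl

theorem fixedSubgroup_eq_top_iff {φ : MulAut G} : φ.fixedSubgroup = ⊤ ↔ φ = 1 := by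
  simp [Subgroup.eq_top_iff', MulEquiv.ext_iff]

theorem mul_inv_apply_eq_iff (φ : MulAut G) (a b : G) :
    a * (φ a)⁻¹ = b * (φ b)⁻¹ ↔ φ (a⁻¹ * b) = a⁻¹ * b := by
  obtain ⟨x, rfl⟩ : ∃ x, b = a * x := ⟨a⁻¹ * b, by group⟩
  rw [inv_mul_cancel_left, map_mul, mul_inv_rev, ← mul_assoc, mul_left_inj,
    mul_assoc, left_eq_mul, mul_inv_eq_one, eq_comm]

theorem relIndex_fixedSubgroup_le [Finite G] (φ : MulAut G) (H : Subgroup G) :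
    φ.fixedSubgroup.relIndex H ≤ Nat.card {x | ∃ g ∈ H, x = g⁻¹ * φ g} := by
  let f : H → {x | ∃ g ∈ H, x = g⁻¹ * φ g} := fun g ↦
    ⟨g * (φ g)⁻¹, (g : G)⁻¹, inv_mem g.2, by rw [inv_inv, map_inv]⟩
  let F : H ⧸ φ.fixedSubgroup.subgroupOf H → {x | ∃ g ∈ H, x = g⁻¹ * φ g} :=
    Quotient.lift f fun a b hab ↦ Subtype.ext <| (φ.mul_inv_apply_eq_iff a b).2 <| by
      simpa [QuotientGroup.leftRel_apply, Subgroup.mem_subgroupOf] using hab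
  refine Nat.card_le_card_of_injective F fun x y hxy ↦ ?_
  induction x using QuotientGroup.induction_on
  induction y using QuotientGroup.induction_on
  refine QuotientGroup.eq.2 (Subgroup.mem_subgroupOf.2 ?_)
  simpa using (φ.mul_inv_apply_eq_iff _ _).1 (congrArg Subtype.val hxy)

end MulAut

section Glauberman

variable {M Ω : Type*} [Group M] [MulAction M Ω]

def IsSemiequivariant (φ : MulAut M) (σ : Equiv.Perm Ω) : Prop :=
  ∀ (g : M) (ω : Ω), σ (g • ω) = φ g • σ ω

variable {φ : MulAut M} {σ : Equiv.Perm Ω}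

namespace IsSemiequivariant

theorem pow (h : IsSemiequivariant φ σ) (n : ℕ) : IsSemiequivariant (φ ^ n) (σ ^ n) := by
  induction n with
  | zero => intro g ω; rfl
  | succ n ih => intro g ω; rw [pow_succ', pow_succ', Equiv.Perm.mul_apply, ih, h]; rfl

theorem card_fixedPoints_dvd_card [Finite M] (h : IsSemiequivariant φ σ) {ω₀ : Ω}
    (hω₀ : σ ω₀ = ω₀) (htrans : ∀ ω, σ ω = ω → ∃ g ∈ φ.fixedSubgroup, g • ω₀ = ω) :
    Nat.card {ω | σ ω = ω} ∣ Nat.card M := by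
  have horbit : {ω | σ ω = ω} = orbit φ.fixedSubgroup ω₀ := by
    ext ω
    refine ⟨fun hω ↦ ?_, ?_⟩
    · obtain ⟨g, hg, rfl⟩ := htrans ω hω
      exact ⟨⟨g, hg⟩, rfl⟩
    · rintro ⟨g, rfl⟩
      exact (h g ω₀).trans (by rw [hω₀, MulAut.mem_fixedSubgroup.1 g.2]; rfl)
  rw [horbit, Nat.card_coe_set_eq, ← index_stabilizer]
  exact (Subgroup.index_dvd_card _).trans (Subgroup.card_subgroup_dvd_card _)

theorem exists_fixed_of_pow [Finite M] {q a m : ℕ} [Fact q.Prime]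
    (h : IsSemiequivariant φ σ) (hσ : σ ^ (q ^ a * m) = 1) (hcop : (q ^ a).Coprime m)
    (hqM : ¬ q ∣ Nat.card M) {ω₀ : Ω} (hω₀ : (σ ^ q ^ a) ω₀ = ω₀)
    (htrans : ∀ ω, (σ ^ q ^ a) ω = ω → ∃ g ∈ (φ ^ q ^ a).fixedSubgroup, g • ω₀ = ω) :
    ∃ ω, σ ω = ω := by
  have hX := (h.pow (q ^ a)).card_fixedPoints_dvd_card hω₀ htrans
  obtain ⟨ω, hω, hωm⟩ := exists_mem_smul_eq_self_of_pow_prime_pow_eq_one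
    (k := σ ^ m) (Y := {ω | (σ ^ q ^ a) ω = ω}) (by rw [← pow_mul, mul_comm, hσ])
    (fun ω ↦ (Commute.pow_pow_self σ _ _).smul_smul_eq_smul_iff) (fun hq ↦ hqM (hq.trans hX))
  exact ⟨ω, smul_eq_self_of_pow_smul_eq_self_of_coprime (k := σ) hcop hω hωm⟩

theorem exists_fixed_smul_eq_of_pow [Finite M] {q a m : ℕ} [Fact q.Prime]
    (h : IsSemiequivariant φ σ) (hφ : φ ^ (q ^ a * m) = 1) (hcop : (q ^ a).Coprime m)
    (hqM : ¬ q ∣ Nat.card M) {ω ω' : Ω} (hω : σ ω = ω) (hω' : σ ω' = ω')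
    (htrans : ∃ g ∈ (φ ^ q ^ a).fixedSubgroup, g • ω = ω') :
    ∃ g ∈ φ.fixedSubgroup, g • ω = ω' := by
  obtain ⟨g₀, hg₀, rfl⟩ := htrans
  have hT := card_transporter_dvd_card _ hg₀ ω
  have hσm (x : Ω) (hx : σ x = x) : (σ ^ m) x = x :=
    Equiv.Perm.pow_apply_eq_self_of_apply_eq_self hx m
  have hσm_smul (g : M) : (σ ^ m) (g • ω) = (φ ^ m) g • ω := by rw [h.pow m, hσm ω hω]
  obtain ⟨g, ⟨hg, hgω⟩, hgm⟩ := exists_mem_smul_eq_self_of_pow_prime_pow_eq_one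
    (k := φ ^ m) (Y := {g | g ∈ (φ ^ q ^ a).fixedSubgroup ∧ g • ω = g₀ • ω})
    (by rw [← pow_mul, mul_comm, hφ]) (fun g ↦ and_congr
      (Commute.pow_pow_self φ _ _).smul_smul_eq_smul_iff
      (by rw [MulAut.smul_def, ← hσm_smul, ← hσm _ hω', (σ ^ m).injective.eq_iff, hσm _ hω']))
    (fun hq ↦ hqM (hq.trans hT))
  exact ⟨g, smul_eq_self_of_pow_smul_eq_self_of_coprime (k := φ) hcop hg hgm, hgω⟩

/-- Glauberman's lemma for a cyclic group of operators. The induction step writes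
`e = q ^ a * m` with `q ∤ m`: the data fixed by `(φ, σ) ^ q ^ a` have size dividing `|M|`, hence
prime to `q`, so the `q`-elements `σ ^ m` and `φ ^ m` fix some of them. -/
theorem exists_fixed_and_transitive [Finite M] [IsPretransitive M Ω] [Nonempty Ω]
    (h : IsSemiequivariant φ σ) {e : ℕ} (he : 0 < e) (hφ : φ ^ e = 1) (hσ : σ ^ e = 1)
    (hcop : e.Coprime (Nat.card M)) :
    (∃ ω, σ ω = ω) ∧ ∀ ω ω', σ ω = ω → σ ω' = ω' → ∃ g ∈ φ.fixedSubgroup, g • ω = ω' := by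
  induction e using Nat.strong_induction_on generalizing φ σ with
  | _ e ih =>
  obtain rfl | he1 := (Nat.one_le_iff_ne_zero.2 he.ne').eq_or_lt
  · rw [pow_one] at hφ hσ
    subst hφ hσ
    exact ⟨⟨Classical.arbitrary Ω, rfl⟩, fun ω ω' _ _ ↦
      (exists_smul_eq M ω ω').imp fun g hg ↦ ⟨rfl, hg⟩⟩
  obtain ⟨q, hq, hqe⟩ := Nat.exists_prime_and_dvd he1.ne'
  have : Fact q.Prime := ⟨hq⟩
  obtain ⟨a, m, hqm, rfl⟩ := Nat.exists_eq_pow_mul_and_not_dvd he.ne' q hq.ne_one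
  have ha : a ≠ 0 := by
    rintro rfl
    exact hqm (by simpa using hqe)
  have hm : 0 < m := Nat.pos_of_ne_zero (by rintro rfl; simp at he)
  have hmlt : m < q ^ a * m := lt_mul_left hm (Nat.one_lt_pow ha hq.one_lt)
  have hcop_qm : (q ^ a).Coprime m := Nat.Coprime.pow_left _ (hq.coprime_iff_not_dvd.2 hqm)
  have hqM : ¬ q ∣ Nat.card M := fun hqM ↦ hq.one_lt.ne' <|
    Nat.eq_one_of_dvd_one (hcop ▸ Nat.dvd_gcd hqe hqM)
  obtain ⟨⟨ω₀, hω₀⟩, htrans⟩ := ih m hmlt (h.pow (q ^ a)) hm (by rw [← pow_mul, hφ])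
    (by rw [← pow_mul, hσ]) (Nat.Coprime.coprime_dvd_left (dvd_mul_left _ _) hcop)
  refine ⟨h.exists_fixed_of_pow hσ hcop_qm hqM hω₀ (fun ω ↦ htrans ω₀ ω hω₀),
    fun ω ω' hω hω' ↦ h.exists_fixed_smul_eq_of_pow hφ hcop_qm hqM hω hω' (htrans ω ω' ?_ ?_)⟩
  · exact Equiv.Perm.pow_apply_eq_self_of_apply_eq_self hω _
  · exact Equiv.Perm.pow_apply_eq_self_of_apply_eq_self hω' _

end IsSemiequivariant

end Glauberman

section FiniteGroup

variable {G : Type*} [Group G] [Finite G]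

theorem Sylow.exists_map_eq_self_of_coprime (p : ℕ) [Fact p.Prime] (α : MulAut G)
    (hα : (orderOf α).Coprime (Nat.card G)) :
    ∃ P : Sylow p G, (P : Subgroup G).map α.toMonoidHom = P := by
  let σ := toPermHom (MulAut G) (Sylow p G) α
  have h : IsSemiequivariant α σ := fun g P ↦ by
    change α • g • P = α g • α • P
    rw [Sylow.smul_def, Sylow.smul_def (g := α g), ← mul_smul, ← mul_smul]
    congr 1
    ext x
    simp [MulAut.conj]
  obtain ⟨⟨P, hP⟩, -⟩ := h.exists_fixed_and_transitive (orderOf_pos α) (pow_orderOf_eq_one α)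
    (by rw [← map_pow, pow_orderOf_eq_one, map_one]) hα
  exact ⟨P, congrArg Sylow.toSubgroup hP⟩

theorem Sylow.pow_dvd_relIndex_of_pow_dvd_index {p k : ℕ} [Fact p.Prime] (P : Sylow p G)
    {H : Subgroup G} (h : p ^ k ∣ H.index) : p ^ k ∣ H.relIndex P := by
  obtain ⟨j, hj⟩ := IsPGroup.iff_card.mp (P.isPGroup'.to_le inf_le_right : IsPGroup p ↥(H ⊓ P))
  have hP : Nat.card ↥(H ⊓ P) * H.relIndex P = Nat.card P := by
    have := Subgroup.relIndex_mul_relIndex ⊥ (H ⊓ P) P bot_le inf_le_right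
    rwa [Subgroup.relIndex_bot_left, Subgroup.relIndex_bot_left,
      Subgroup.inf_relIndex_right] at this
  have hG : p ^ k * p ^ j ∣ Nat.card G := by
    rw [← H.index_mul_card, ← hj]
    exact mul_dvd_mul h (Subgroup.card_dvd_of_le inf_le_left)
  have := P.pow_dvd_card_of_pow_dvd_card (by rwa [pow_add])
  rw [← hP, hj, pow_add, mul_comm (p ^ j)] at this
  exact Nat.dvd_of_mul_dvd_mul_right (pow_pos (Fact.out : p.Prime).pos j) this

theorem IsSimpleGroup.card_dvd_factorial_index [IsSimpleGroup G] {H : Subgroup G} (hH : H ≠ ⊤) :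
    Nat.card G ∣ H.index.factorial := by
  have hcore : H.normalCore = ⊥ :=
    H.normalCore_normal.eq_bot_or_eq_top.resolve_right fun h ↦
      hH (top_le_iff.mp (h ▸ H.normalCore_le))
  rw [← Subgroup.index_bot, ← hcore, Subgroup.normalCore_eq_ker, Subgroup.index_ker,
    Subgroup.index_eq_card, ← Nat.card_perm]
  exact Subgroup.card_subgroup_dvd_card _

end FiniteGroup

/-- Lemma 2.2(1): There is `f : ℕ → ℕ` such that if a finite nonabelian simple group `G`
admits a coprime automorphism `α` of order `e > 1`, and `|[P,α]| ≤ r` for every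
`α`-invariant Sylow subgroup `P` of `G` (with `r ≥ 1`), then `|G| ≤ f r`. -/
theorem simple_order_bounded_of_sylow_commutators_bounded :
    ∃ f : ℕ → ℕ,
      ∀ (G : Type*) [Group G] [Finite G] [IsSimpleGroup G],
        (∃ a b : G, a * b ≠ b * a) →
        ∀ (α : MulAut G) (e r : ℕ),
          orderOf α = e → 1 < e → Nat.Coprime e (Nat.card G) → 0 < r →
          (∀ (p : ℕ) [Fact p.Prime] (P : Sylow p G),
            Subgroup.map α.toMonoidHom (P : Subgroup G) = P →
            Nat.card (Subgroup.closure {x : G | ∃ g ∈ (P : Subgroup G), x = g⁻¹ * α g}) ≤ r) →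
          Nat.card G ≤ f r := by
  refine ⟨fun r ↦ r.factorial.factorial, ?_⟩
  intro G _ _ _ _ α e r horder he hcop _ hbound
  subst horder
  have hC : α.fixedSubgroup ≠ ⊤ := by
    rw [Ne, MulAut.fixedSubgroup_eq_top_iff]
    rintro rfl
    simp at he
  have hindex : α.fixedSubgroup.index ∣ r.factorial := by
    refine (Nat.dvd_iff_prime_pow_dvd_dvd _ _).2 fun p k hp hpk ↦ ?_
    have := Fact.mk hp
    obtain ⟨P, hP⟩ := Sylow.exists_map_eq_self_of_coprime p α hcop
    refine Nat.dvd_factorial (pow_pos hp.pos k) ?_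
    calc p ^ k ≤ α.fixedSubgroup.relIndex P :=
          Nat.le_of_dvd (Nat.pos_of_dvd_of_pos (Subgroup.relIndex_dvd_card _ _) Nat.card_pos)
            (P.pow_dvd_relIndex_of_pow_dvd_index hpk)
      _ ≤ Nat.card {x | ∃ g ∈ (P : Subgroup G), x = g⁻¹ * α g} := α.relIndex_fixedSubgroup_le P
      _ ≤ Nat.card (Subgroup.closure {x : G | ∃ g ∈ (P : Subgroup G), x = g⁻¹ * α g}) :=
          Nat.card_mono (Set.toFinite _) Subgroup.subset_closure
      _ ≤ r := hbound p P hP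
  calc Nat.card G ≤ α.fixedSubgroup.index.factorial :=
        Nat.le_of_dvd (Nat.factorial_pos _) (IsSimpleGroup.card_dvd_factorial_index hC)
    _ ≤ r.factorial.factorial := Nat.factorial_le (Nat.le_of_dvd r.factorial_pos hindex)
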